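/- Let G be a finite simple graph with no isolated vertices, minimum degree δ and maximum degree Δ, and let s_0 be the unique solution of s² − 2√s + 1 = 0 in (0,1). Then R(G) ≤ (Δ/2)·ID(G), with equality if and only if G is regular; moreover, if δ ≥ s_0·Δ then R(G) ≥ (δ/2)·ID(G), while if δ ≤ s_0·Δ then R(G) ≥ ((Δδ)^{3/2}/(Δ²+δ²))·ID(G). Here ID(G) = Σ_{u∈V(G)} 1/d_u is the inverse degree index. -/

import Mathlib

open Finset

variable {V : Type*}

/-- Randić index: `Σ_{uv∈E} (d_u d_v)^{-1/2}`, written as half a double sum over vertices. -/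
noncomputable def randicIndex [Fintype V] (G : SimpleGraph V) [DecidableRel G.Adj] : ℝ :=
  (1 / 2) * ∑ u, ∑ v ∈ G.neighborFinset u,
    1 / Real.sqrt ((G.degree u : ℝ) * (G.degree v : ℝ))

/-- Inverse degree index `ID(G) = Σ_{u∈V} 1/d_u`. -/
noncomputable def inverseDegree [Fintype V] (G : SimpleGraph V) [DecidableRel G.Adj] : ℝ :=
  ∑ u, 1 / (G.degree u : ℝ)

/-!
Both indices are sums over edges: an edge whose ends have degrees `a²` and `b²` contributes
`1/(ab)` to `2R(G)` and `1/a⁴ + 1/b⁴` to `2ID(G)`, and the ratio of the two is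
`φ(a, b) = a/b³ + b/a³`.

The upper bound does not need `φ`: by AM–GM `R(G) ≤ n/2`, while `n ≤ Δ·ID(G)` with equality
exactly for regular graphs.

For the lower bounds, `φ` is decreasing in its smaller argument and convex in its larger one, so
on `[√δ, √Δ]²` it is maximal at `(√δ, √δ)` or at `(√δ, √Δ)`, where it equals `2/δ` resp.
`(δ² + Δ²)/(δΔ)^{3/2}`. With `p = √δ`, `q = √Δ` the difference of these two values has the sign of
`p⁴ + q⁴ - 2pq³ = (p - q)(p³ + p²q + pq² - q³)`, and `w = √s₀` is the positive root of
`w³ + w² + w = 1`, so the larger value is the first one iff `w q ≤ p`, i.e. iff `s₀Δ ≤ δ`.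
-/

noncomputable def edgeRatio (a b : ℝ) : ℝ := a / b ^ 3 + b / a ^ 3

lemma edgeRatio_comm (a b : ℝ) : edgeRatio a b = edgeRatio b a := add_comm _ _

lemma edgeRatio_self (a : ℝ) : edgeRatio a a = 2 / a ^ 2 := by
  rcases eq_or_ne a 0 with rfl | ha
  · simp [edgeRatio]
  · unfold edgeRatio; field_simp; ring

lemma edgeRatio_le_of_le_of_le {p a b : ℝ} (hp : 0 < p) (hpa : p ≤ a) (hab : a ≤ b) :
    edgeRatio a b ≤ edgeRatio p b := by
  have ha : 0 < a := hp.trans_le hpa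
  have hb : 0 < b := ha.trans_le hab
  have hdiff : edgeRatio p b - edgeRatio a b =
      (a - p) * (b ^ 4 * (a ^ 2 + a * p + p ^ 2) - a ^ 3 * p ^ 3) / (a ^ 3 * p ^ 3 * b ^ 3) := by
    unfold edgeRatio; field_simp; ring
  have hkey : a ^ 3 * p ^ 3 ≤ b ^ 4 * (a ^ 2 + a * p + p ^ 2) :=
    calc a ^ 3 * p ^ 3 ≤ a ^ 3 * a ^ 3 := by gcongr
      _ = a ^ 4 * a ^ 2 := by ring
      _ ≤ b ^ 4 * (a ^ 2 + a * p + p ^ 2) := by gcongr; nlinarith [mul_pos ha hp]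
  rw [← sub_nonneg, hdiff]
  exact div_nonneg (mul_nonneg (sub_nonneg.2 hpa) (sub_nonneg.2 hkey)) (by positivity)

lemma convexOn_edgeRatio {p : ℝ} (hp : 0 < p) : ConvexOn ℝ (Set.Ioi 0) (edgeRatio p) :=
  (((convexOn_zpow (-3)).smul hp.le).add
    ((convexOn_id (convex_Ioi 0)).smul (inv_nonneg.2 (pow_pos hp 3).le))).congr
    fun b _ => by simp [edgeRatio, zpow_neg, div_eq_mul_inv, mul_comm]

lemma edgeRatio_le_max {p q a b : ℝ} (hp : 0 < p) (ha : a ∈ Set.Icc p q) (hb : b ∈ Set.Icc p q) :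
    edgeRatio a b ≤ max (edgeRatio p p) (edgeRatio p q) := by
  wlog hab : a ≤ b generalizing a b
  · rw [edgeRatio_comm]; exact this hb ha (le_of_not_ge hab)
  calc edgeRatio a b ≤ edgeRatio p b := edgeRatio_le_of_le_of_le hp ha.1 hab
    _ ≤ max (edgeRatio p p) (edgeRatio p q) :=
      (convexOn_edgeRatio hp).le_max_of_mem_Icc hp (hp.trans_le (hb.1.trans hb.2)) hb

lemma edgeRatio_sub_edgeRatio_self {p q : ℝ} (hp : 0 < p) (hq : 0 < q) :
    edgeRatio p q - edgeRatio p p =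
      (p - q) * (p ^ 3 + p ^ 2 * q + p * q ^ 2 - q ^ 3) / (p ^ 3 * q ^ 3) := by
  rw [edgeRatio_self]; unfold edgeRatio; field_simp; ring

lemma edgeRatio_le_edgeRatio_self {w p q : ℝ} (hw : w ^ 3 + w ^ 2 + w = 1) (hp : 0 < p)
    (hwp : w * q ≤ p) (hpq : p ≤ q) : edgeRatio p q ≤ edgeRatio p p := by
  have hw0 : 0 < w := by nlinarith [sq_nonneg w]
  have hq : 0 < q := hp.trans_le hpq
  have hcube : q ^ 3 ≤ p ^ 3 + p ^ 2 * q + p * q ^ 2 :=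
    calc q ^ 3 = (w * q) ^ 3 + (w * q) ^ 2 * q + (w * q) * q ^ 2 := by
          linear_combination -q ^ 3 * hw
      _ ≤ p ^ 3 + p ^ 2 * q + p * q ^ 2 := by gcongr
  rw [← sub_nonpos, edgeRatio_sub_edgeRatio_self hp hq]
  exact div_nonpos_of_nonpos_of_nonneg
    (mul_nonpos_of_nonpos_of_nonneg (sub_nonpos.2 hpq) (by linarith)) (by positivity)

lemma edgeRatio_self_le_edgeRatio {w p q : ℝ} (hw : w ^ 3 + w ^ 2 + w = 1) (hp : 0 < p)
    (hpw : p ≤ w * q) : edgeRatio p p ≤ edgeRatio p q := by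
  have hw0 : 0 < w := by nlinarith [sq_nonneg w]
  have hq : 0 < q := by nlinarith
  have hpq : p ≤ q := by nlinarith
  have hcube : p ^ 3 + p ^ 2 * q + p * q ^ 2 ≤ q ^ 3 :=
    calc p ^ 3 + p ^ 2 * q + p * q ^ 2 ≤ (w * q) ^ 3 + (w * q) ^ 2 * q + (w * q) * q ^ 2 := by
          gcongr
      _ = q ^ 3 := by linear_combination q ^ 3 * hw
  rw [← sub_nonneg, edgeRatio_sub_edgeRatio_self hp hq]
  exact div_nonneg (mul_nonneg_of_nonpos_of_nonpos (sub_nonpos.2 hpq) (by linarith))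
    (by positivity)

lemma edgeRatio_sqrt {x y : ℝ} (hx : 0 < x) (hy : 0 < y) :
    edgeRatio √x √y = (x ^ 2 + y ^ 2) / (x * y) ^ (3 / 2 : ℝ) := by
  have h32 : (x * y) ^ (3 / 2 : ℝ) = (√x * √y) ^ 3 := by
    rw [← Real.sqrt_mul hx.le, Real.sqrt_eq_rpow, ← Real.rpow_natCast,
      ← Real.rpow_mul (by positivity)]
    norm_num
  have hx2 : x ^ 2 = √x ^ 4 := by rw [show √x ^ 4 = (√x ^ 2) ^ 2 by ring, Real.sq_sqrt hx.le]
  have hy2 : y ^ 2 = √y ^ 4 := by rw [show √y ^ 4 = (√y ^ 2) ^ 2 by ring, Real.sq_sqrt hy.le]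
  have : 0 < √x := Real.sqrt_pos.2 hx
  have : 0 < √y := Real.sqrt_pos.2 hy
  rw [h32, hx2, hy2]
  unfold edgeRatio; field_simp

lemma one_div_sq_add_one_div_sq_eq_edgeRatio_div {x y : ℝ} (hx : 0 < x) (hy : 0 < y) :
    1 / x ^ 2 + 1 / y ^ 2 = edgeRatio √x √y / √(x * y) := by
  have : 0 < √x := Real.sqrt_pos.2 hx
  have : 0 < √y := Real.sqrt_pos.2 hy
  conv_lhs => rw [← Real.sq_sqrt hx.le, ← Real.sq_sqrt hy.le]
  rw [Real.sqrt_mul hx.le]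
  unfold edgeRatio; field_simp; ring

lemma one_div_sqrt_mul_le {x y : ℝ} (hx : 0 ≤ x) (hy : 0 ≤ y) :
    1 / √(x * y) ≤ (1 / x + 1 / y) / 2 := by
  have h := two_mul_le_add_sq √(1 / x) √(1 / y)
  rw [Real.sq_sqrt (by positivity), Real.sq_sqrt (by positivity), mul_assoc,
    ← Real.sqrt_mul (by positivity), one_div_mul_one_div, Real.sqrt_div' _ (mul_nonneg hx hy),
    Real.sqrt_one] at h
  linarith

lemma sqrt_cube_add_sq_add_self {s : ℝ} (hs : s ∈ Set.Ioo 0 1) (h : s ^ 2 - 2 * √s + 1 = 0) :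
    √s ^ 3 + √s ^ 2 + √s = 1 := by
  have hw1 : √s < 1 := (Real.sqrt_lt' one_pos).2 (by simpa using hs.2)
  have hroot : (√s - 1) * (√s ^ 3 + √s ^ 2 + √s - 1) = 0 := by
    linear_combination h + (Real.sq_sqrt hs.1.le) * (√s ^ 2 + s)
  have := (mul_eq_zero.1 hroot).resolve_left (sub_ne_zero.2 hw1.ne)
  linarith

namespace SimpleGraph

variable [Fintype V] (G : SimpleGraph V) [DecidableRel G.Adj]

lemma sum_sum_neighborFinset_comm {M : Type*} [AddCommMonoid M] (f : V → V → M) :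
    ∑ u, ∑ v ∈ G.neighborFinset u, f u v = ∑ u, ∑ v ∈ G.neighborFinset u, f v u := by
  simp_rw [neighborFinset_eq_filter, sum_filter]
  rw [sum_comm]
  simp_rw [G.adj_comm]

lemma sum_sum_neighborFinset_left {M : Type*} [AddCommMonoid M] (f : V → M) :
    ∑ u, ∑ _v ∈ G.neighborFinset u, f u = ∑ u, G.degree u • f u := by
  simp [sum_const, card_neighborFinset_eq_degree]

lemma two_mul_inverseDegree :
    2 * inverseDegree G = ∑ u, ∑ v ∈ G.neighborFinset u,
      (1 / (G.degree u : ℝ) ^ 2 + 1 / (G.degree v : ℝ) ^ 2) := by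
  have hleft : ∑ u, ∑ _v ∈ G.neighborFinset u, 1 / (G.degree u : ℝ) ^ 2 = inverseDegree G := by
    rw [sum_sum_neighborFinset_left]
    refine sum_congr rfl fun u _ => ?_
    rcases eq_or_ne (G.degree u : ℝ) 0 with h | h
    · simp [h]
    · rw [nsmul_eq_mul]; field_simp
  simp_rw [sum_add_distrib]
  rw [← G.sum_sum_neighborFinset_comm (fun u _ => 1 / (G.degree u : ℝ) ^ 2), hleft, two_mul]

lemma randicIndex_le_card_div_two : randicIndex G ≤ Fintype.card V / 2 := by
  calc randicIndex G ≤ (1 / 2) * ∑ u, ∑ v ∈ G.neighborFinset u,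
        (1 / (G.degree u : ℝ) + 1 / (G.degree v : ℝ)) / 2 := by
        unfold randicIndex; gcongr _ * ∑ u, ∑ v ∈ _, ?_
        exact one_div_sqrt_mul_le (Nat.cast_nonneg _) (Nat.cast_nonneg _)
    _ = (1 / 2) * ∑ u, G.degree u • (1 / (G.degree u : ℝ)) := by
        simp_rw [← sum_div, sum_add_distrib]
        rw [← G.sum_sum_neighborFinset_comm (fun u _ => 1 / (G.degree u : ℝ)),
          sum_sum_neighborFinset_left]
        ring
    _ ≤ (1 / 2) * ∑ _u : V, 1 := by
        gcongr with u
        rw [nsmul_eq_mul, mul_one_div]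
        exact div_self_le_one _
    _ = Fintype.card V / 2 := by simp; ring

lemma randicIndex_eq_card_div_two_of_isRegularOfDegree {k : ℕ} (hk : 0 < k)
    (h : G.IsRegularOfDegree k) :
    randicIndex G = Fintype.card V / 2 := by
  have hk' : (k : ℝ) ≠ 0 := by positivity
  simp only [randicIndex, h.degree_eq, Real.sqrt_mul_self (Nat.cast_nonneg k), sum_const,
    card_neighborFinset_eq_degree, nsmul_eq_mul, mul_one_div_cancel hk', card_univ]
  ring

lemma maxDegree_mul_inverseDegree_eq_sum :
    (G.maxDegree : ℝ) * inverseDegree G = ∑ u, (G.maxDegree : ℝ) / G.degree u := by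
  simp_rw [inverseDegree, mul_sum, mul_one_div]

lemma one_le_maxDegree_div_degree {u : V} (hu : 0 < G.degree u) :
    1 ≤ (G.maxDegree : ℝ) / G.degree u :=
  (one_le_div (by exact_mod_cast hu)).2 (by exact_mod_cast G.degree_le_maxDegree u)

lemma card_le_maxDegree_mul_inverseDegree (hiso : ∀ v, 0 < G.degree v) :
    (Fintype.card V : ℝ) ≤ G.maxDegree * inverseDegree G := by
  rw [maxDegree_mul_inverseDegree_eq_sum]
  simpa using sum_le_sum fun u (_ : u ∈ univ) => G.one_le_maxDegree_div_degree (hiso u)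

lemma maxDegree_mul_inverseDegree_eq_card_iff (hiso : ∀ v, 0 < G.degree v) :
    (G.maxDegree : ℝ) * inverseDegree G = Fintype.card V ↔ G.IsRegularOfDegree G.maxDegree := by
  rw [maxDegree_mul_inverseDegree_eq_sum, eq_comm]
  have := sum_eq_sum_iff_of_le fun u (_ : u ∈ univ) => G.one_le_maxDegree_div_degree (hiso u)
  simp only [sum_const, card_univ, nsmul_eq_mul, mul_one, mem_univ, true_implies] at this
  rw [this]
  refine forall_congr' fun u => ?_
  rw [eq_div_iff (by exact_mod_cast (hiso u).ne'), one_mul, Nat.cast_inj]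

lemma inverseDegree_le_mul_randicIndex {M : ℝ}
    (h : ∀ u v, G.Adj u v → edgeRatio √(G.degree u : ℝ) √(G.degree v : ℝ) ≤ M) :
    inverseDegree G ≤ M * randicIndex G := by
  have hdeg : ∀ {u v}, G.Adj u v → (0 : ℝ) < G.degree u := fun {u _} huv => by
    exact_mod_cast (G.degree_pos_iff_exists_adj u).2 ⟨_, huv⟩
  have hedge : ∀ u, ∀ v ∈ G.neighborFinset u, 1 / (G.degree u : ℝ) ^ 2 + 1 / (G.degree v : ℝ) ^ 2
      ≤ M * (1 / √((G.degree u : ℝ) * G.degree v)) := fun u v hv => by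
    have huv := (G.mem_neighborFinset u v).1 hv
    rw [one_div_sq_add_one_div_sq_eq_edgeRatio_div (hdeg huv) (hdeg huv.symm), div_eq_mul_one_div]
    exact mul_le_mul_of_nonneg_right (h u v huv) (by positivity)
  have := calc 2 * inverseDegree G
      = ∑ u, ∑ v ∈ G.neighborFinset u, (1 / (G.degree u : ℝ) ^ 2 + 1 / (G.degree v : ℝ) ^ 2) :=
        G.two_mul_inverseDegree
    _ ≤ ∑ u, ∑ v ∈ G.neighborFinset u, M * (1 / √((G.degree u : ℝ) * G.degree v)) :=
        sum_le_sum fun u _ => sum_le_sum (hedge u)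
    _ = 2 * (M * randicIndex G) := by simp_rw [randicIndex, ← mul_sum]; ring
  linarith

lemma inverseDegree_le_max_mul_randicIndex (hδ : 0 < G.minDegree) :
    inverseDegree G ≤ max (edgeRatio √(G.minDegree : ℝ) √(G.minDegree : ℝ))
      (edgeRatio √(G.minDegree : ℝ) √(G.maxDegree : ℝ)) * randicIndex G :=
  G.inverseDegree_le_mul_randicIndex fun u v _ =>
    edgeRatio_le_max (Real.sqrt_pos.2 (by exact_mod_cast hδ))
      ⟨Real.sqrt_le_sqrt (by exact_mod_cast G.minDegree_le_degree u),
        Real.sqrt_le_sqrt (by exact_mod_cast G.degree_le_maxDegree u)⟩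
      ⟨Real.sqrt_le_sqrt (by exact_mod_cast G.minDegree_le_degree v),
        Real.sqrt_le_sqrt (by exact_mod_cast G.degree_le_maxDegree v)⟩

lemma minDegree_div_two_mul_inverseDegree_le_randicIndex (hδ : 0 < G.minDegree) {s : ℝ}
    (hs : s ∈ Set.Ioo 0 1) (hroot : s ^ 2 - 2 * √s + 1 = 0)
    (hcond : s * G.maxDegree ≤ G.minDegree) :
    (G.minDegree : ℝ) / 2 * inverseDegree G ≤ randicIndex G := by
  have hδ' : (0 : ℝ) < G.minDegree := by exact_mod_cast hδ
  have hratio : edgeRatio √(G.minDegree : ℝ) √(G.maxDegree : ℝ)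
      ≤ edgeRatio √(G.minDegree : ℝ) √(G.minDegree : ℝ) := by
    refine edgeRatio_le_edgeRatio_self (sqrt_cube_add_sq_add_self hs hroot)
      (Real.sqrt_pos.2 hδ') ?_
      (Real.sqrt_le_sqrt (by exact_mod_cast G.minDegree_le_maxDegree))
    rw [← Real.sqrt_mul hs.1.le]
    exact Real.sqrt_le_sqrt hcond
  have hID := G.inverseDegree_le_max_mul_randicIndex hδ
  rw [max_eq_left hratio, edgeRatio_self, Real.sq_sqrt hδ'.le] at hID
  calc (G.minDegree : ℝ) / 2 * inverseDegree G
      ≤ G.minDegree / 2 * (2 / G.minDegree * randicIndex G) := by gcongr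
    _ = randicIndex G := by field_simp

lemma rpow_div_mul_inverseDegree_le_randicIndex (hδ : 0 < G.minDegree) {s : ℝ}
    (hs : s ∈ Set.Ioo 0 1) (hroot : s ^ 2 - 2 * √s + 1 = 0)
    (hcond : (G.minDegree : ℝ) ≤ s * G.maxDegree) :
    ((G.maxDegree : ℝ) * G.minDegree) ^ ((3 : ℝ) / 2) / ((G.maxDegree : ℝ) ^ 2 + G.minDegree ^ 2)
      * inverseDegree G ≤ randicIndex G := by
  have hδ' : (0 : ℝ) < G.minDegree := by exact_mod_cast hδ
  have hΔ' : (0 : ℝ) < G.maxDegree := hδ'.trans_le (by exact_mod_cast G.minDegree_le_maxDegree)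
  have hratio : edgeRatio √(G.minDegree : ℝ) √(G.minDegree : ℝ)
      ≤ edgeRatio √(G.minDegree : ℝ) √(G.maxDegree : ℝ) := by
    refine edgeRatio_self_le_edgeRatio (sqrt_cube_add_sq_add_self hs hroot)
      (Real.sqrt_pos.2 hδ') ?_
    rw [← Real.sqrt_mul hs.1.le]
    exact Real.sqrt_le_sqrt hcond
  have hID := G.inverseDegree_le_max_mul_randicIndex hδ
  rw [max_eq_right hratio, edgeRatio_comm, edgeRatio_sqrt hΔ' hδ'] at hID
  set X := ((G.maxDegree : ℝ) * G.minDegree) ^ ((3 : ℝ) / 2)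
  set Y := (G.maxDegree : ℝ) ^ 2 + G.minDegree ^ 2
  have hX : 0 < X := by positivity
  have hY : 0 < Y := by positivity
  calc X / Y * inverseDegree G ≤ X / Y * (Y / X * randicIndex G) := by gcongr
    _ = randicIndex G := by field_simp

end SimpleGraph

theorem randic_inverse_degree_bounds [Fintype V] (G : SimpleGraph V) [DecidableRel G.Adj]
    (hiso : ∀ v : V, 0 < G.degree v) (s₀ : ℝ)
    (hs₀ : s₀ ∈ Set.Ioo (0:ℝ) 1 ∧ s₀^2 - 2 * Real.sqrt s₀ + 1 = 0) :
    (randicIndex G ≤ (G.maxDegree : ℝ) / 2 * inverseDegree G) ∧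
    (randicIndex G = (G.maxDegree : ℝ) / 2 * inverseDegree G ↔
      ∃ k, G.IsRegularOfDegree k) ∧
    (s₀ * (G.maxDegree : ℝ) ≤ (G.minDegree : ℝ) →
      (G.minDegree : ℝ) / 2 * inverseDegree G ≤ randicIndex G) ∧
    ((G.minDegree : ℝ) ≤ s₀ * (G.maxDegree : ℝ) →
      ((G.maxDegree : ℝ) * (G.minDegree : ℝ)) ^ ((3:ℝ)/2) /
          ((G.maxDegree : ℝ)^2 + (G.minDegree : ℝ)^2) * inverseDegree G ≤ randicIndex G) := by
  rcases isEmpty_or_nonempty V with hV | hV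
  · simp [randicIndex, inverseDegree, SimpleGraph.IsRegularOfDegree.of_isEmpty]
  have hδ : 0 < G.minDegree := by
    obtain ⟨v, hv⟩ := G.exists_minimal_degree_vertex
    exact hv ▸ hiso v
  have hR := G.randicIndex_le_card_div_two
  have hn := G.card_le_maxDegree_mul_inverseDegree hiso
  refine ⟨by linarith,
    ⟨fun heq => ⟨_, (G.maxDegree_mul_inverseDegree_eq_card_iff hiso).1 (by linarith)⟩,
      fun ⟨k, hk⟩ => ?_⟩,
    G.minDegree_div_two_mul_inverseDegree_le_randicIndex hδ hs₀.1 hs₀.2,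
    G.rpow_div_mul_inverseDegree_le_randicIndex hδ hs₀.1 hs₀.2⟩
  have hk0 : 0 < k := hk (Classical.arbitrary V) ▸ hiso _
  have hΔ := (G.maxDegree_mul_inverseDegree_eq_card_iff hiso).2 (hk.maxDegree_eq ▸ hk)
  rw [G.randicIndex_eq_card_div_two_of_isRegularOfDegree hk0 hk]
  linarith
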